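/- There exists a topological dynamical system (X,f) on a compact metric space with L_r = 2·L̄_r. Specifically, let X ⊂ ℝ³ be the surface given in cylindrical coordinates by {(r, φ, h(r)) : 0 ≤ r ≤ 1, φ ∈ ℝ} with h(r) = 8r(1−r), equipped with the Euclidean metric, and let f(r, φ, h(r)) = (g(r), 2φ, h(g(r))) with g(x) = 2x − x². Then L_r = 2·L̄_r for this system. -/

import Mathlib

open Filter Topology

variable {X : Type*} [MetricSpace X]

/-- The limsup of the distance between the orbits of `x` and `y`. -/
noncomputable def limsupDist (f : X → X) (x y : X) : ℝ :=
  Filter.limsup (fun n : ℕ => dist (f^[n] x) (f^[n] y)) Filter.atTop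

/-- The (first) Lyapunov number `L_r`. -/
noncomputable def Lr (f : X → X) : ℝ :=
  sSup {ε : ℝ | ∀ x : X, ∀ U ∈ 𝓝 x, ∃ y ∈ U, ∃ n : ℕ, ε < dist (f^[n] x) (f^[n] y)}

/-- The second Lyapunov number `L_d`. -/
noncomputable def Ld (f : X → X) : ℝ :=
  sSup {ε : ℝ | ∀ U : Set X, IsOpen U → U.Nonempty →
    ∃ x ∈ U, ∃ y ∈ U, ∃ n : ℕ, 1 ≤ n ∧ ε < dist (f^[n] x) (f^[n] y)}

/-- The limsup version `L̄_r` of the first Lyapunov number. -/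
noncomputable def Lrbar (f : X → X) : ℝ :=
  sSup {ε : ℝ | ∀ x : X, ∀ U : Set X, IsOpen U → x ∈ U →
    ∃ y ∈ U, ε < limsupDist f x y}

/-- The limsup version `L̄_d` of the second Lyapunov number. -/
noncomputable def Ldbar (f : X → X) : ℝ :=
  sSup {ε : ℝ | ∀ U : Set X, IsOpen U → U.Nonempty →
    ∃ x ∈ U, ∃ y ∈ U, ε < limsupDist f x y}

/-- Sensitive dependence on initial conditions. -/
def Sensitive (f : X → X) : Prop :=
  ∃ ε > (0 : ℝ), ∀ x : X, ∀ U ∈ 𝓝 x, ∃ y ∈ U, ∃ n : ℕ, ε < dist (f^[n] x) (f^[n] y)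

/-- Topological transitivity (some hitting time for each pair of opene sets). -/
def TopTransitive {Y : Type*} [TopologicalSpace Y] (f : Y → Y) : Prop :=
  ∀ U V : Set Y, IsOpen U → U.Nonempty → IsOpen V → V.Nonempty →
    ∃ n : ℕ, (U ∩ f^[n] ⁻¹' V).Nonempty

/-- Topological weak mixing: the product system is topologically transitive. -/
def WeaklyMixing {Y : Type*} [TopologicalSpace Y] (f : Y → Y) : Prop :=
  TopTransitive (fun p : Y × Y => (f p.1, f p.2))

/-- A point whose forward orbit is dense. -/
def TransitivePoint (f : X → X) (x : X) : Prop :=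
  Dense (Set.range fun n : ℕ => f^[n] x)

/-- A minimal set: nonempty, closed, invariant, and every orbit inside it is dense in it. -/
def IsMinimalSet (f : X → X) (M : Set X) : Prop :=
  M.Nonempty ∧ IsClosed M ∧ Set.MapsTo f M M ∧
    ∀ y ∈ M, M ⊆ closure (Set.range fun n : ℕ => f^[n] y)

/-- A minimal point: a point lying in some minimal set. -/
def MinimalPoint (f : X → X) (x : X) : Prop :=
  ∃ M : Set X, IsMinimalSet f M ∧ x ∈ M

/-- A syndetic subset of ℤ₊ : bounded gaps. -/
def Syndetic (S : Set ℕ) : Prop :=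
  ∃ N : ℕ, ∀ i : ℕ, ∃ n ∈ S, i ≤ n ∧ n ≤ i + N

/-- A thick subset of ℤ₊ : arbitrarily long runs of consecutive integers. -/
def Thick (S : Set ℕ) : Prop :=
  ∀ k : ℕ, ∃ n : ℕ, ∀ m ≤ k, n + m ∈ S

/-- The point of the surface with cylindrical coordinates `(r, φ, 8r(1-r))`. -/
noncomputable def surfPt (r φ : ℝ) : EuclideanSpace ℝ (Fin 3) :=
  (EuclideanSpace.equiv (Fin 3) ℝ).symm
    ![r * Real.cos φ, r * Real.sin φ, 8 * r * (1 - r)]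

/-- The surface `X ⊂ ℝ³` of the example. -/
def Surf : Set (EuclideanSpace ℝ (Fin 3)) :=
  {p | ∃ r φ : ℝ, 0 ≤ r ∧ r ≤ 1 ∧ p = surfPt r φ}

noncomputable def Phi (c : ℂ) : ℂ := (2 - ‖c‖) * (c^2 / (‖c‖ : ℂ))

lemma Phi_zero : Phi 0 = 0 := by simp [Phi]

lemma norm_ofReal_abs (c : ℂ) : ‖((‖c‖ : ℝ) : ℂ)‖ = ‖c‖ := by
  rw [Complex.norm_real, Real.norm_eq_abs, abs_of_nonneg (norm_nonneg c)]

lemma norm_Phi_le (c : ℂ) : ‖Phi c‖ ≤ (2 + ‖c‖) * ‖c‖ := by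
  rcases eq_or_ne c 0 with h | h
  · simp [h, Phi]
  · have hpos : (0:ℝ) < ‖c‖ := norm_pos_iff.mpr h
    rw [Phi, norm_mul]
    have h1 : ‖(2 - ((‖c‖ : ℝ) : ℂ))‖ ≤ 2 + ‖c‖ := by
      calc ‖(2 - ((‖c‖ : ℝ) : ℂ))‖ ≤ ‖(2:ℂ)‖ + ‖((‖c‖ : ℝ) : ℂ)‖ :=
        norm_sub_le _ _
      _ ≤ 2 + ‖c‖ := by rw [norm_ofReal_abs]; norm_num
    have h2 : ‖c^2 / ((‖c‖ : ℝ) : ℂ)‖ = ‖c‖ := by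
      rw [norm_div, norm_pow, norm_ofReal_abs]
      have : ‖c‖ ≠ 0 := norm_ne_zero_iff.mpr h
      field_simp
    rw [h2]
    exact mul_le_mul_of_nonneg_right h1 hpos.le

lemma continuous_Phi : Continuous Phi := by
  rw [continuous_iff_continuousAt]
  intro c
  rcases eq_or_ne c 0 with rfl | h
  · rw [ContinuousAt, Phi_zero]
    apply squeeze_zero_norm norm_Phi_le
    have h1 : Continuous fun c : ℂ => (2 + ‖c‖) * ‖c‖ := by continuity
    have := h1.tendsto 0
    simpa using this
  · have habs : ((‖c‖ : ℝ) : ℂ) ≠ 0 := by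
      simpa using (norm_ne_zero_iff).mpr h
    apply ContinuousAt.mul
    · exact continuousAt_const.sub
        (Complex.continuous_ofReal.continuousAt.comp continuous_norm.continuousAt)
    · exact (continuousAt_pow _ _).div
        (Complex.continuous_ofReal.continuousAt.comp continuous_norm.continuousAt) habs

noncomputable def cc (p : EuclideanSpace ℝ (Fin 3)) : ℂ := (p 0 : ℂ) + (p 1 : ℂ) * Complex.I

lemma cc_surfPt (r φ : ℝ) : cc (surfPt r φ) = (r : ℂ) * Complex.exp (φ * Complex.I) := by
  have h0 : surfPt r φ 0 = r * Real.cos φ := rfl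
  have h1 : surfPt r φ 1 = r * Real.sin φ := rfl
  rw [cc, h0, h1, Complex.exp_mul_I]
  push_cast
  ring

lemma re_mul_exp (a b : ℝ) : ((a:ℂ) * Complex.exp (b * Complex.I)).re = a * Real.cos b := by
  simp [Complex.mul_re, Complex.exp_ofReal_mul_I_re, Complex.exp_ofReal_mul_I_im]

lemma im_mul_exp (a b : ℝ) : ((a:ℂ) * Complex.exp (b * Complex.I)).im = a * Real.sin b := by
  simp [Complex.mul_im, Complex.exp_ofReal_mul_I_re, Complex.exp_ofReal_mul_I_im]

lemma Phi_polar (r φ : ℝ) (hr : 0 ≤ r) :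
    Phi ((r : ℂ) * Complex.exp (φ * Complex.I)) =
      (((2 - r) * r : ℝ) : ℂ) * Complex.exp ((2 * φ : ℝ) * Complex.I) := by
  have habs : ‖(r : ℂ) * Complex.exp (φ * Complex.I)‖ = r := by
    rw [norm_mul, Complex.norm_real, Real.norm_eq_abs, Complex.norm_exp_ofReal_mul_I, abs_of_nonneg hr, mul_one]
  rcases eq_or_lt_of_le hr with h | h
  · simp [Phi, ← h]
  · rw [Phi, habs]
    have hexp : ((r : ℂ) * Complex.exp (φ * Complex.I))^2
        = (r:ℂ)^2 * Complex.exp ((2 * φ : ℝ) * Complex.I) := by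
      rw [mul_pow, ← Complex.exp_nat_mul]
      push_cast
      ring_nf
    rw [hexp]
    have hrne : (r : ℂ) ≠ 0 := by exact_mod_cast h.ne'
    push_cast
    field_simp

noncomputable def Fmap (p : EuclideanSpace ℝ (Fin 3)) : EuclideanSpace ℝ (Fin 3) :=
  (EuclideanSpace.equiv (Fin 3) ℝ).symm
    ![(Phi (cc p)).re, (Phi (cc p)).im,
      8 * (‖cc p‖ * (2 - ‖cc p‖))
        * (1 - ‖cc p‖ * (2 - ‖cc p‖))]

lemma Fmap_surfPt (r φ : ℝ) (hr : 0 ≤ r) :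
    Fmap (surfPt r φ) = surfPt (2 * r - r^2) (2 * φ) := by
  have habs : ‖cc (surfPt r φ)‖ = r := by
    rw [cc_surfPt, norm_mul, Complex.norm_real, Real.norm_eq_abs, Complex.norm_exp_ofReal_mul_I,
      abs_of_nonneg hr, mul_one]
  have hphi : Phi (cc (surfPt r φ)) =
      (((2 - r) * r : ℝ) : ℂ) * Complex.exp ((2 * φ : ℝ) * Complex.I) := by
    rw [cc_surfPt, Phi_polar r φ hr]
  have hre : (Phi (cc (surfPt r φ))).re = (2 * r - r^2) * Real.cos (2 * φ) := by
    rw [hphi, re_mul_exp]; ring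
  have him : (Phi (cc (surfPt r φ))).im = (2 * r - r^2) * Real.sin (2 * φ) := by
    rw [hphi, im_mul_exp]; ring
  have h3 : (8 : ℝ) * (‖cc (surfPt r φ)‖ * (2 - ‖cc (surfPt r φ)‖))
        * (1 - ‖cc (surfPt r φ)‖ * (2 - ‖cc (surfPt r φ)‖))
      = 8 * (2 * r - r^2) * (1 - (2 * r - r^2)) := by
    rw [habs]; ring
  rw [Fmap, hre, him, h3, surfPt]

lemma continuous_cc : Continuous cc := by
  unfold cc
  fun_prop

lemma continuous_Fmap : Continuous Fmap := by
  unfold Fmap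
  refine (EuclideanSpace.equiv (Fin 3) ℝ).symm.continuous.comp ?_
  refine continuous_pi fun i => ?_
  have hc : Continuous fun p : EuclideanSpace ℝ (Fin 3) => Phi (cc p) :=
    continuous_Phi.comp continuous_cc
  have ha : Continuous fun p : EuclideanSpace ℝ (Fin 3) => ‖cc p‖ :=
    continuous_norm.comp continuous_cc
  have h3 : Continuous fun p : EuclideanSpace ℝ (Fin 3) =>
      (8 * (‖cc p‖ * (2 - ‖cc p‖))
        * (1 - ‖cc p‖ * (2 - ‖cc p‖))) := by fun_prop
  fin_cases i
  · exact Complex.continuous_re.comp hc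
  · exact Complex.continuous_im.comp hc
  · exact h3

lemma mapsTo_Fmap : Set.MapsTo Fmap Surf Surf := by
  rintro p ⟨r, φ, h0, h1, rfl⟩
  exact ⟨2*r - r^2, 2*φ, by nlinarith, by nlinarith, Fmap_surfPt r φ h0⟩

noncomputable def fS : Surf → Surf := fun p => ⟨Fmap p.1, mapsTo_Fmap p.2⟩

lemma continuous_fS : Continuous fS :=
  (continuous_Fmap.comp continuous_subtype_val).subtype_mk _

lemma fS_val (p : Surf) (r φ : ℝ) (h0 : 0 ≤ r) (hp : (p : EuclideanSpace ℝ (Fin 3)) = surfPt r φ) :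
    ((fS p : Surf) : EuclideanSpace ℝ (Fin 3)) = surfPt (2*r - r^2) (2*φ) := by
  show Fmap p.1 = _
  rw [hp, Fmap_surfPt r φ h0]

noncomputable def Rad (n : ℕ) (r : ℝ) : ℝ := 1 - (1 - r)^(2^n)

lemma Rad_zero (r : ℝ) : Rad 0 r = r := by simp [Rad]

lemma Rad_mem (n : ℕ) {r : ℝ} (h0 : 0 ≤ r) (h1 : r ≤ 1) : 0 ≤ Rad n r ∧ Rad n r ≤ 1 := by
  have hp1 : (0:ℝ) ≤ (1-r)^(2^n) := pow_nonneg (by linarith) _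
  have hp2 : (1-r)^(2^n) ≤ 1 := pow_le_one₀ (by linarith) (by linarith)
  constructor <;> [skip; skip] <;> unfold Rad <;> linarith

lemma Rad_succ (n : ℕ) (r : ℝ) : 2 * Rad n r - (Rad n r)^2 = Rad (n+1) r := by
  have h : (1-r)^(2^(n+1)) = ((1-r)^(2^n))^2 := by rw [← pow_mul, ← pow_succ]
  unfold Rad
  rw [h]; ring

lemma Rad_one (n : ℕ) : Rad n 1 = 1 := by
  simp [Rad, zero_pow (pow_pos (by norm_num : (0:ℕ) < 2) n).ne']

lemma Rad_ge (n : ℕ) {r : ℝ} (h0 : 0 ≤ r) (h1 : r ≤ 1) : r ≤ Rad n r := by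
  have : (1-r)^(2^n) ≤ 1 - r :=
    pow_le_of_le_one (by linarith) (by linarith) (pow_pos (by norm_num : (0:ℕ) < 2) n).ne'
  unfold Rad; linarith

lemma Rad_tendsto {r : ℝ} (h0 : 0 < r) (h1 : r ≤ 1) :
    Tendsto (fun n => Rad n r) atTop (𝓝 1) := by
  have h2 : Tendsto (fun k : ℕ => (1-r)^k) atTop (𝓝 0) :=
    tendsto_pow_atTop_nhds_zero_of_lt_one (by linarith) (by linarith)
  have h3 : Tendsto (fun n : ℕ => 2^n) atTop atTop :=
    tendsto_pow_atTop_atTop_of_one_lt one_lt_two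
  have h4 : Tendsto (fun n : ℕ => (1-r)^(2^n)) atTop (𝓝 0) := h2.comp h3
  have := (tendsto_const_nhds (x := (1:ℝ)) (f := atTop)).sub h4
  unfold Rad
  simpa using this

lemma orbit_val (r φ : ℝ) (h0 : 0 ≤ r) (h1 : r ≤ 1) (hmem : surfPt r φ ∈ Surf) (n : ℕ) :
    ((fS^[n] ⟨surfPt r φ, hmem⟩ : Surf) : EuclideanSpace ℝ (Fin 3))
      = surfPt (Rad n r) (2^n * φ) := by
  induction n with
  | zero => simp [Rad_zero]
  | succ n ih =>
    rw [Function.iterate_succ_apply',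
      fS_val _ (Rad n r) (2^n * φ) (Rad_mem n h0 h1).1 ih, Rad_succ]
    congr 1
    ring

lemma continuous_surfPt : Continuous fun z : ℝ × ℝ => surfPt z.1 z.2 := by
  unfold surfPt
  refine (EuclideanSpace.equiv (Fin 3) ℝ).symm.continuous.comp (continuous_pi fun i => ?_)
  have hA : Continuous fun z : ℝ × ℝ => z.1 * Real.cos z.2 := by fun_prop
  have hB : Continuous fun z : ℝ × ℝ => z.1 * Real.sin z.2 := by fun_prop
  have hC : Continuous fun z : ℝ × ℝ => 8 * z.1 * (1 - z.1) := by fun_prop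
  fin_cases i
  · exact hA
  · exact hB
  · exact hC

lemma surfPt_fst_0 (r φ : ℝ) : surfPt r φ 0 = r * Real.cos φ := rfl
lemma surfPt_fst_1 (r φ : ℝ) : surfPt r φ 1 = r * Real.sin φ := rfl
lemma surfPt_fst_2 (r φ : ℝ) : surfPt r φ 2 = 8 * r * (1 - r) := rfl

lemma dist_surfPt (r1 a r2 b : ℝ) :
    dist (surfPt r1 a) (surfPt r2 b) =
      Real.sqrt ((r1 * Real.cos a - r2 * Real.cos b)^2 + (r1 * Real.sin a - r2 * Real.sin b)^2
        + (8 * r1 * (1 - r1) - 8 * r2 * (1 - r2))^2) := by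
  rw [EuclideanSpace.dist_eq, Fin.sum_univ_three]
  simp only [surfPt_fst_0, surfPt_fst_1, surfPt_fst_2, Real.dist_eq, sq_abs]

lemma dist_surfPt_same (r a b : ℝ) (hr : 0 ≤ r) :
    dist (surfPt r a) (surfPt r b) = r * Real.sqrt (2 - 2 * Real.cos (a - b)) := by
  rw [dist_surfPt]
  have h : (r * Real.cos a - r * Real.cos b)^2 + (r * Real.sin a - r * Real.sin b)^2
      + (8 * r * (1 - r) - 8 * r * (1 - r))^2 = r^2 * (2 - 2 * Real.cos (a - b)) := by
    rw [Real.cos_sub]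
    have ha := Real.sin_sq_add_cos_sq a
    have hb := Real.sin_sq_add_cos_sq b
    ring_nf
    nlinarith [ha, hb]
  rw [h, Real.sqrt_mul (by positivity), Real.sqrt_sq hr]

lemma dist_surfPt_zero (r b c : ℝ) :
    dist (surfPt 0 c) (surfPt r b) = Real.sqrt (r^2 + (8 * r * (1 - r))^2) := by
  rw [dist_surfPt]
  congr 1
  have := Real.sin_sq_add_cos_sq b
  ring_nf
  nlinarith [this]

lemma surfPt_zero (a b : ℝ) : surfPt 0 a = surfPt 0 b := by
  unfold surfPt
  norm_num

lemma cos_two_pi_div_three : Real.cos (2 * Real.pi / 3) = -(1/2) := by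
  have h : 2 * Real.pi / 3 = Real.pi - Real.pi / 3 := by ring
  rw [h, Real.cos_pi_sub, Real.cos_pi_div_three]

lemma cos_pow_two_mul_two_pi_div_three (j : ℕ) :
    Real.cos (2^j * (2 * Real.pi / 3)) = -(1/2) := by
  induction j with
  | zero => simpa using cos_two_pi_div_three
  | succ j ih =>
    have h : (2:ℝ)^(j+1) * (2 * Real.pi / 3) = 2 * (2^j * (2 * Real.pi / 3)) := by ring
    rw [h, Real.cos_two_mul, ih]
    norm_num

noncomputable def qr (n : ℕ) : ℝ := 1 - (1/2 : ℝ) ^ (((2:ℝ)^n)⁻¹)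

lemma qr_mem (n : ℕ) : 0 ≤ qr n ∧ qr n ≤ 1 := by
  have h1 : (1/2 : ℝ) ^ (((2:ℝ)^n)⁻¹) ≤ 1 :=
    Real.rpow_le_one (by norm_num) (by norm_num) (by positivity)
  have h2 : (0:ℝ) < (1/2 : ℝ) ^ (((2:ℝ)^n)⁻¹) := Real.rpow_pos_of_pos (by norm_num) _
  unfold qr
  constructor <;> linarith

lemma Rad_qr (n : ℕ) : Rad n (qr n) = 1/2 := by
  unfold Rad qr
  have h1 : (1 - (1 - (1/2 : ℝ) ^ (((2:ℝ)^n)⁻¹))) = (1/2 : ℝ) ^ (((2:ℝ)^n)⁻¹) := by ring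
  rw [h1, ← Real.rpow_natCast ((1/2 : ℝ) ^ (((2:ℝ)^n)⁻¹)) (2^n), ← Real.rpow_mul (by norm_num)]
  have h2 : ((2:ℝ)^n)⁻¹ * ((2^n : ℕ) : ℝ) = 1 := by
    push_cast
    field_simp
  rw [h2, Real.rpow_one]
  norm_num

lemma qr_tendsto : Tendsto qr atTop (𝓝 0) := by
  have h3 : Tendsto (fun n : ℕ => (2:ℝ)^n) atTop atTop :=
    tendsto_pow_atTop_atTop_of_one_lt one_lt_two
  have h4 : Tendsto (fun n : ℕ => ((2:ℝ)^n)⁻¹) atTop (𝓝 0) :=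
    tendsto_inv_atTop_zero.comp h3
  have h5 : ContinuousAt (fun x : ℝ => (1/2 : ℝ) ^ x) 0 :=
    Real.continuousAt_const_rpow (by norm_num)
  have h6 : Tendsto (fun n : ℕ => (1/2 : ℝ) ^ (((2:ℝ)^n)⁻¹)) atTop (𝓝 ((1/2 : ℝ) ^ (0:ℝ))) :=
    (h5.tendsto).comp h4
  rw [Real.rpow_zero] at h6
  have h7 := (tendsto_const_nhds (x := (1:ℝ)) (f := atTop)).sub h6
  unfold qr
  simpa using h7

lemma abs_cc_surfPt (r φ : ℝ) (hr : 0 ≤ r) : ‖cc (surfPt r φ)‖ = r := by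
  rw [cc_surfPt, norm_mul, Complex.norm_real, Real.norm_eq_abs, Complex.norm_exp_ofReal_mul_I,
    abs_of_nonneg hr, mul_one]

lemma Rad_zero' (n : ℕ) : Rad n 0 = 0 := by simp [Rad]

lemma mem_surf (r φ : ℝ) (h0 : 0 ≤ r) (h1 : r ≤ 1) : surfPt r φ ∈ Surf := ⟨r, φ, h0, h1, rfl⟩

lemma Lr_mem_lt {ε : ℝ}
    (hε : ε ∈ {ε : ℝ | ∀ x : Surf, ∀ U ∈ 𝓝 x, ∃ y ∈ U, ∃ n : ℕ,
      ε < dist (fS^[n] x) (fS^[n] y)}) : ε < 2 := by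
  set x₀ : Surf := ⟨surfPt 1 0, mem_surf 1 0 (by norm_num) le_rfl⟩ with hx₀
  set U : Set Surf := {p : Surf | 31/32 < ‖cc (p : EuclideanSpace ℝ (Fin 3))‖} with hUdef
  have hUopen : IsOpen U := by
    have hcont : Continuous fun p : Surf => ‖cc (p : EuclideanSpace ℝ (Fin 3))‖ :=
      continuous_norm.comp (continuous_cc.comp continuous_subtype_val)
    exact isOpen_Ioi.preimage hcont
  have hx₀U : x₀ ∈ U := by
    show (31/32 : ℝ) < ‖cc (surfPt 1 0)‖
    rw [abs_cc_surfPt 1 0 (by norm_num)]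
    norm_num
  obtain ⟨y, hyU, n, hn⟩ := hε x₀ U (hUopen.mem_nhds hx₀U)
  obtain ⟨ρ, ψ, h0, h1, hy⟩ := y.2
  have hρ : 31/32 < ρ := by
    have := hyU
    rw [hUdef] at this
    simp only [Set.mem_setOf_eq, hy, abs_cc_surfPt ρ ψ h0] at this
    exact this
  have hyx : y = ⟨surfPt ρ ψ, mem_surf ρ ψ h0 h1⟩ := Subtype.ext hy
  rw [Subtype.dist_eq, hyx, orbit_val ρ ψ h0 h1 _ n] at hn
  rw [hx₀] at hn
  rw [orbit_val 1 0 (by norm_num) le_rfl _ n] at hn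
  have hkey : dist (surfPt (Rad n 1) (2^n * 0)) (surfPt (Rad n ρ) (2^n * ψ)) ≤ 2 := by
    rw [Rad_one, dist_surfPt]
    have hρn1 : Rad n ρ ≤ 1 := (Rad_mem n h0 h1).2
    have hρn2 : ρ ≤ Rad n ρ := Rad_ge n h0 h1
    have hs := Real.sin_sq_add_cos_sq (2^n * ψ)
    have hc := Real.neg_one_le_cos (2^n * ψ)
    have hin : (1 * Real.cos (2^n * 0) - Rad n ρ * Real.cos (2^n * ψ))^2
        + (1 * Real.sin (2^n * 0) - Rad n ρ * Real.sin (2^n * ψ))^2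
        + (8 * 1 * (1 - 1) - 8 * Rad n ρ * (1 - Rad n ρ))^2 ≤ 4 := by
      rw [mul_zero, Real.cos_zero, Real.sin_zero]
      set t := Rad n ρ with ht
      have ht0 : (0:ℝ) ≤ t := le_trans (by linarith) hρn2
      have ht31 : (31/32 : ℝ) ≤ t := le_trans hρ.le hρn2
      have hinner : (0:ℝ) ≤ 3 + t - 64 * t^2 * (1 - t) := by nlinarith [sq_nonneg t]
      have hfact : (0:ℝ) ≤ (1 - t) * (3 + t - 64 * t^2 * (1 - t)) :=
        mul_nonneg (by linarith) hinner
      nlinarith [hs, hc, hfact, mul_le_mul_of_nonneg_left hc ht0]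
    calc Real.sqrt _ ≤ Real.sqrt 4 := Real.sqrt_le_sqrt hin
    _ = 2 := by rw [show (4:ℝ) = 2^2 by norm_num, Real.sqrt_sq (by norm_num)]
  linarith

lemma tendsto_surfPt_of {u : ℕ → ℝ} {v : ℕ → ℝ} {a b : ℝ}
    (hu : Tendsto u atTop (𝓝 a)) (hv : Tendsto v atTop (𝓝 b)) :
    Tendsto (fun n => surfPt (u n) (v n)) atTop (𝓝 (surfPt a b)) :=
  (continuous_surfPt.tendsto (a, b)).comp (hu.prodMk_nhds hv)

lemma Lr_lt_mem {ε : ℝ} (hε : ε < 2) :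
    ε ∈ {ε : ℝ | ∀ x : Surf, ∀ U ∈ 𝓝 x, ∃ y ∈ U, ∃ n : ℕ,
      ε < dist (fS^[n] x) (fS^[n] y)} := by
  intro x U hU
  obtain ⟨r, φ, h0, h1, hx⟩ := x.2
  have hxe : x = ⟨surfPt r φ, mem_surf r φ h0 h1⟩ := Subtype.ext hx
  rcases eq_or_lt_of_le h0 with hr0 | hr0
  · -- r = 0 : x is the origin
    set yn : ℕ → Surf := fun n => ⟨surfPt (qr n) 0, mem_surf _ 0 (qr_mem n).1 (qr_mem n).2⟩
      with hyn
    have hten : Tendsto yn atTop (𝓝 x) := by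
      apply tendsto_subtype_rng.mpr
      have h2 : Tendsto (fun n => surfPt (qr n) 0) atTop (𝓝 (surfPt 0 0)) :=
        tendsto_surfPt_of qr_tendsto tendsto_const_nhds
      rw [hx, ← hr0, surfPt_zero φ 0]
      exact h2
    obtain ⟨n, hnU⟩ := (hten.eventually_mem hU).exists
    refine ⟨yn n, hnU, n, ?_⟩
    rw [Subtype.dist_eq, hxe, orbit_val r φ h0 h1 _ n, hyn]
    simp only []
    rw [orbit_val (qr n) 0 (qr_mem n).1 (qr_mem n).2 _ n, ← hr0, Rad_zero', Rad_qr]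
    rw [dist_surfPt_zero]
    have h4 : ((1:ℝ)/2)^2 + (8 * (1/2) * (1 - 1/2))^2 = 17/4 := by norm_num
    rw [h4]
    have : (2:ℝ) < Real.sqrt (17/4) := (Real.lt_sqrt (by norm_num)).mpr (by norm_num)
    linarith
  · -- 0 < r
    set yn : ℕ → Surf := fun n =>
      ⟨surfPt r (φ + Real.pi / 2^n), mem_surf r _ h0 h1⟩ with hyn
    have hang : Tendsto (fun n : ℕ => φ + Real.pi / 2^n) atTop (𝓝 φ) := by
      have h5 : Tendsto (fun n : ℕ => Real.pi * (1/2)^n) atTop (𝓝 0) := by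
        have := (tendsto_pow_atTop_nhds_zero_of_lt_one
          (by norm_num : (0:ℝ) ≤ 1/2) (by norm_num)).const_mul Real.pi
        simpa using this
      have h6 : (fun n : ℕ => Real.pi / 2^n) = fun n : ℕ => Real.pi * (1/2)^n := by
        funext n; rw [div_eq_mul_inv, one_div, inv_pow]
      have h7 := tendsto_const_nhds (x := φ) (f := atTop (α := ℕ)) |>.add (h6 ▸ h5)
      simpa using h7
    have hten : Tendsto yn atTop (𝓝 x) := by
      apply tendsto_subtype_rng.mpr
      rw [hx]
      exact tendsto_surfPt_of tendsto_const_nhds hang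
    have hev1 := hten.eventually_mem hU
    have hev2 : ∀ᶠ n in atTop, ε < 2 * Rad n r := by
      have h8 : Tendsto (fun n => 2 * Rad n r) atTop (𝓝 2) := by
        have := (Rad_tendsto hr0 h1).const_mul 2
        simpa using this
      exact h8.eventually (eventually_gt_nhds hε)
    obtain ⟨n, hnU, hnε⟩ := (hev1.and hev2).exists
    refine ⟨yn n, hnU, n, ?_⟩
    rw [Subtype.dist_eq, hxe, orbit_val r φ h0 h1 _ n, hyn]
    simp only []
    rw [orbit_val r _ h0 h1 _ n]
    rw [dist_surfPt_same _ _ _ (Rad_mem n h0 h1).1]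
    have h9 : (2:ℝ)^n * φ - 2^n * (φ + Real.pi / 2^n) = -Real.pi := by
      have : (2:ℝ)^n ≠ 0 := by positivity
      field_simp
      ring
    rw [h9, Real.cos_neg, Real.cos_pi]
    have h10 : Real.sqrt (2 - 2 * (-1)) = 2 := by
      rw [show (2:ℝ) - 2 * (-1) = 2^2 by norm_num, Real.sqrt_sq (by norm_num)]
    rw [h10]
    linarith [hnε]

noncomputable def Dfun (t : ℝ) : ℝ := Real.sqrt (t^2 + (8 * t * (1 - t))^2)

lemma continuous_Dfun : Continuous Dfun := by
  unfold Dfun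
  fun_prop

lemma Dfun_one : Dfun 1 = 1 := by
  unfold Dfun
  norm_num

/-- orbit distance from origin -/
lemma origin_orbit_dist (hmem0 : surfPt 0 0 ∈ Surf) {ρ ψ : ℝ} (h0 : 0 ≤ ρ) (h1 : ρ ≤ 1)
    (hmem : surfPt ρ ψ ∈ Surf) (n : ℕ) :
    dist (fS^[n] ⟨surfPt 0 0, hmem0⟩) (fS^[n] ⟨surfPt ρ ψ, hmem⟩) = Dfun (Rad n ρ) := by
  rw [Subtype.dist_eq, orbit_val 0 0 le_rfl (by norm_num) _ n,
    orbit_val ρ ψ h0 h1 _ n, Rad_zero', dist_surfPt_zero]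
  rfl

lemma limsup_origin {ρ ψ : ℝ} (h0 : 0 < ρ) (h1 : ρ ≤ 1) (hmem0 : surfPt 0 0 ∈ Surf)
    (hmem : surfPt ρ ψ ∈ Surf) :
    limsupDist fS ⟨surfPt 0 0, hmem0⟩ ⟨surfPt ρ ψ, hmem⟩ = 1 := by
  unfold limsupDist
  have h2 : Tendsto (fun n => dist (fS^[n] (⟨surfPt 0 0, hmem0⟩ : Surf))
      (fS^[n] (⟨surfPt ρ ψ, hmem⟩ : Surf))) atTop (𝓝 1) := by
    have h3 : Tendsto (fun n => Dfun (Rad n ρ)) atTop (𝓝 (Dfun 1)) :=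
      (continuous_Dfun.tendsto 1).comp (Rad_tendsto h0 h1)
    rw [Dfun_one] at h3
    exact h3.congr (fun n => (origin_orbit_dist hmem0 h0.le h1 hmem n).symm)
  exact h2.limsup_eq

lemma Lrbar_mem_lt {ε : ℝ}
    (hε : ε ∈ {ε : ℝ | ∀ x : Surf, ∀ U : Set Surf, IsOpen U → x ∈ U →
      ∃ y ∈ U, ε < limsupDist fS x y}) : ε < 1 := by
  obtain ⟨y, -, hlt⟩ := hε ⟨surfPt 0 0, mem_surf 0 0 le_rfl (by norm_num)⟩
    Set.univ isOpen_univ (Set.mem_univ _)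
  obtain ⟨ρ, ψ, h0, h1, hy⟩ := y.2
  have hyx : y = ⟨surfPt ρ ψ, mem_surf ρ ψ h0 h1⟩ := Subtype.ext hy
  rw [hyx] at hlt
  rcases eq_or_lt_of_le h0 with hρ0 | hρ0
  · -- y is origin too : limsup = 0
    have hz : limsupDist fS (⟨surfPt 0 0, mem_surf 0 0 le_rfl (by norm_num)⟩ : Surf)
        ⟨surfPt ρ ψ, mem_surf ρ ψ h0 h1⟩ = 0 := by
      unfold limsupDist
      have hcon : ∀ n : ℕ, dist (fS^[n] (⟨surfPt 0 0, mem_surf 0 0 le_rfl (by norm_num)⟩ : Surf))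
          (fS^[n] (⟨surfPt ρ ψ, mem_surf ρ ψ h0 h1⟩ : Surf)) = 0 := by
        intro n
        rw [origin_orbit_dist _ h0 h1 _ n, ← hρ0, Rad_zero']
        unfold Dfun
        norm_num
      simp only [hcon]
      exact limsup_const 0
    rw [hz] at hlt
    linarith
  · rw [limsup_origin hρ0 h1] at hlt
    exact hlt

lemma Lrbar_lt_mem {ε : ℝ} (hε : ε < 1) :
    ε ∈ {ε : ℝ | ∀ x : Surf, ∀ U : Set Surf, IsOpen U → x ∈ U →
      ∃ y ∈ U, ε < limsupDist fS x y} := by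
  intro x U hUopen hxU
  have hU : U ∈ 𝓝 x := hUopen.mem_nhds hxU
  obtain ⟨r, φ, h0, h1, hx⟩ := x.2
  have hxe : x = ⟨surfPt r φ, mem_surf r φ h0 h1⟩ := Subtype.ext hx
  rcases eq_or_lt_of_le h0 with hr0 | hr0
  · -- x is the origin
    set yn : ℕ → Surf := fun n =>
      ⟨surfPt ((1/2)^(n+1)) 0, mem_surf _ 0 (by positivity) (by
        apply pow_le_one₀ <;> norm_num)⟩ with hyn
    have hten : Tendsto yn atTop (𝓝 x) := by
      apply tendsto_subtype_rng.mpr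
      have h2 : Tendsto (fun n : ℕ => ((1:ℝ)/2)^(n+1)) atTop (𝓝 0) := by
        have := (tendsto_pow_atTop_nhds_zero_of_lt_one
          (by norm_num : (0:ℝ) ≤ 1/2) (by norm_num)).comp (tendsto_add_atTop_nat 1)
        exact this
      have h3 := tendsto_surfPt_of h2 (tendsto_const_nhds (x := (0:ℝ)))
      rw [hx, ← hr0, surfPt_zero φ 0]
      exact h3
    obtain ⟨n, hnU⟩ := (hten.eventually_mem hU).exists
    refine ⟨yn n, hnU, ?_⟩
    rw [hxe]
    have hx0 : (⟨surfPt r φ, mem_surf r φ h0 h1⟩ : Surf)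
        = ⟨surfPt 0 0, mem_surf 0 0 le_rfl (by norm_num)⟩ := by
      apply Subtype.ext
      simp only [← hr0]
      exact surfPt_zero φ 0
    rw [hx0, hyn]
    rw [limsup_origin (by positivity) (by apply pow_le_one₀ <;> norm_num) _ _]
    exact hε
  · -- 0 < r
    set yn : ℕ → Surf := fun m =>
      ⟨surfPt r (φ + 2 * Real.pi / 3 * (1/2)^m), mem_surf r _ h0 h1⟩ with hyn
    have hang : Tendsto (fun m : ℕ => φ + 2 * Real.pi / 3 * (1/2)^m) atTop (𝓝 φ) := by
      have h5 := (tendsto_pow_atTop_nhds_zero_of_lt_one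
        (by norm_num : (0:ℝ) ≤ 1/2) (by norm_num)).const_mul (2 * Real.pi / 3)
      have h7 := tendsto_const_nhds (x := φ) (f := atTop (α := ℕ)) |>.add h5
      simpa using h7
    have hten : Tendsto yn atTop (𝓝 x) := by
      apply tendsto_subtype_rng.mpr
      rw [hx]
      exact tendsto_surfPt_of tendsto_const_nhds hang
    obtain ⟨m, hmU⟩ := (hten.eventually_mem hU).exists
    refine ⟨yn m, hmU, ?_⟩
    have hdist : ∀ n, m ≤ n → dist (fS^[n] x) (fS^[n] (yn m))
        = Rad n r * Real.sqrt 3 := by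
      intro n hmn
      rw [Subtype.dist_eq, hxe, orbit_val r φ h0 h1 _ n, hyn]
      simp only []
      rw [orbit_val r _ h0 h1 _ n, dist_surfPt_same _ _ _ (Rad_mem n h0 h1).1]
      have h9 : (2:ℝ)^n * φ - 2^n * (φ + 2 * Real.pi / 3 * (1/2)^m)
          = -(2^(n-m) * (2 * Real.pi / 3)) := by
        have h10 : (2:ℝ)^n * (1/2)^m = 2^(n-m) := by
          rw [one_div, inv_pow, ← pow_sub₀ _ (by norm_num) hmn]
        have h11 : (2:ℝ)^n * (1/2)^m * (2*Real.pi/3) = 2^(n-m) * (2*Real.pi/3) := by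
          rw [h10]
        linear_combination (-1 : ℝ) * h11
      rw [h9, Real.cos_neg, cos_pow_two_mul_two_pi_div_three (n - m)]
      norm_num
    have hlim : Tendsto (fun n => dist (fS^[n] x) (fS^[n] (yn m))) atTop
        (𝓝 (Real.sqrt 3)) := by
      have h11 : Tendsto (fun n => Rad n r * Real.sqrt 3) atTop (𝓝 (Real.sqrt 3)) := by
        have := (Rad_tendsto hr0 h1).mul_const (Real.sqrt 3)
        simpa using this
      apply h11.congr'
      filter_upwards [eventually_ge_atTop m] with n hn
      exact (hdist n hn).symm
    unfold limsupDist
    rw [hlim.limsup_eq]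
    have : (1:ℝ) < Real.sqrt 3 := by
      rw [show (1:ℝ) = Real.sqrt 1 by simp]
      exact Real.sqrt_lt_sqrt (by norm_num) (by norm_num)
    linarith

theorem main : Lr fS = 2 * Lrbar fS := by
  have h1 : {ε : ℝ | ∀ x : Surf, ∀ U ∈ 𝓝 x, ∃ y ∈ U, ∃ n : ℕ,
      ε < dist (fS^[n] x) (fS^[n] y)} = Set.Iio 2 := by
    ext ε
    exact ⟨Lr_mem_lt, Lr_lt_mem⟩
  have h2 : {ε : ℝ | ∀ x : Surf, ∀ U : Set Surf, IsOpen U → x ∈ U →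
      ∃ y ∈ U, ε < limsupDist fS x y} = Set.Iio 1 := by
    ext ε
    exact ⟨Lrbar_mem_lt, Lrbar_lt_mem⟩
  rw [Lr, Lrbar, h1, h2, csSup_Iio, csSup_Iio]
  norm_num

/-- There is a (continuous) dynamical system on the surface `X`, acting in cylindrical
coordinates by `(r, φ) ↦ (2r - r², 2φ)`, and for it `L_r = 2 L̄_r`. -/
theorem stmt19 :
    ∃ f : Surf → Surf, Continuous f ∧
      (∀ (r φ : ℝ) (h0 : 0 ≤ r) (h1 : r ≤ 1),
        (f ⟨surfPt r φ, ⟨r, φ, h0, h1, rfl⟩⟩ : EuclideanSpace ℝ (Fin 3)) =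
          surfPt (2 * r - r ^ 2) (2 * φ)) ∧
      Lr f = 2 * Lrbar f :=
  ⟨fS, continuous_fS, fun r φ h0 h1 => fS_val _ r φ h0 rfl, main⟩
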